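/- Let n, m be positive integers, α ∈ ℝ^n and β ∈ ℝ^m probability vectors, and C ∈ ℝ^{n×m} a cost matrix. For ε > 0 define the entropically regularized transport cost OT_ε(α,β) := inf over couplings γ ∈ Π(α,β) of ∑_{i,j} C_{ij}γ_{ij} + ε ∑_{i,j} γ_{ij}(log γ_{ij} − 1), with the convention 0·(log 0 − 1) = 0. Then OT_ε(α,β) converges to the unregularized optimal transport cost OT(α,β) := min_{γ∈Π(α,β)} ∑_{i,j} C_{ij}γ_{ij} as ε → 0⁺; indeed |OT_ε(α,β) − OT(α,β)| ≤ ε·M where M := sup_{γ∈Π(α,β)} |∑_{i,j} γ_{ij}(log γ_{ij} − 1)| is finite. -/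
import Mathlib

open Finset

/-- The negative entropy `∑_{i,j} γᵢⱼ (log γᵢⱼ - 1)` of a coupling matrix, with the
convention `0 * (log 0 - 1) = 0`. -/
noncomputable def negEntropy {n m : ℕ} (γ : Fin n → Fin m → ℝ) : ℝ :=
  ∑ i, ∑ j, if γ i j = 0 then 0 else γ i j * (Real.log (γ i j) - 1)

lemma term_abs_le {x : ℝ} (hx : 0 ≤ x) (hx1 : x ≤ 1) :
    |if x = 0 then 0 else x * (Real.log x - 1)| ≤ 1 := by
  split_ifs with h
  · simp
  · have hxpos : 0 < x := lt_of_le_of_ne hx (Ne.symm h)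
    have hlogle : Real.log x ≤ 0 := Real.log_nonpos hx hx1
    have hub : x * (Real.log x - 1) ≤ 0 :=
      mul_nonpos_of_nonneg_of_nonpos hx (by linarith)
    have hlb : 1 - x⁻¹ ≤ Real.log x := Real.one_sub_inv_le_log_of_pos hxpos
    have : x * (1 - x⁻¹) ≤ x * Real.log x := by
      exact mul_le_mul_of_nonneg_left hlb hx
    have hxinv : x * x⁻¹ = 1 := mul_inv_cancel₀ h
    have : -1 ≤ x * (Real.log x - 1) := by nlinarith
    rw [abs_le]; constructor <;> linarith

lemma negEntropy_abs_le {n m : ℕ} {γ : Fin n → Fin m → ℝ}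
    (h0 : ∀ i j, 0 ≤ γ i j) (h1 : ∀ i j, γ i j ≤ 1) :
    |negEntropy γ| ≤ (n : ℝ) * m := by
  unfold negEntropy
  calc |∑ i, ∑ j, if γ i j = 0 then 0 else γ i j * (Real.log (γ i j) - 1)|
      ≤ ∑ i, |∑ j, if γ i j = 0 then 0 else γ i j * (Real.log (γ i j) - 1)| :=
        Finset.abs_sum_le_sum_abs _ _
    _ ≤ ∑ i : Fin n, ∑ j : Fin m, (1 : ℝ) := by
        apply Finset.sum_le_sum
        intro i _
        calc |∑ j, if γ i j = 0 then 0 else γ i j * (Real.log (γ i j) - 1)|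
            ≤ ∑ j, |if γ i j = 0 then 0 else γ i j * (Real.log (γ i j) - 1)| :=
              Finset.abs_sum_le_sum_abs _ _
          _ ≤ ∑ j : Fin m, (1 : ℝ) :=
              Finset.sum_le_sum fun j _ => term_abs_le (h0 i j) (h1 i j)
    _ = (n : ℝ) * m := by simp [mul_comm]

/-- The entropically regularized optimal transport cost `OT_ε` converges to the
unregularized cost `OT` as `ε → 0⁺`; indeed `|OT_ε - OT| ≤ ε * M` where
`M = sup_{γ ∈ Π(α,β)} |∑_{i,j} γᵢⱼ (log γᵢⱼ - 1)|` is finite (the entropy term is bounded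
on the compact coupling set). -/
theorem entropic_ot_converges_to_ot
    (n m : ℕ) (hn : 0 < n) (hm : 0 < m)
    (α : Fin n → ℝ) (β : Fin m → ℝ)
    (hα : ∀ i, 0 ≤ α i) (hαsum : ∑ i, α i = 1)
    (hβ : ∀ j, 0 ≤ β j) (hβsum : ∑ j, β j = 1)
    (C : Fin n → Fin m → ℝ) :
    let Pi : Set (Fin n → Fin m → ℝ) :=
      {γ | (∀ i j, 0 ≤ γ i j) ∧ (∀ i, ∑ j, γ i j = α i) ∧ (∀ j, ∑ i, γ i j = β j)}
    let cost : (Fin n → Fin m → ℝ) → ℝ := fun γ => ∑ i, ∑ j, C i j * γ i j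
    let OTreg : ℝ → ℝ := fun ε => sInf {c : ℝ | ∃ γ ∈ Pi, c = cost γ + ε * negEntropy γ}
    let OT : ℝ := sInf {c : ℝ | ∃ γ ∈ Pi, c = cost γ}
    let M : ℝ := sSup ((fun γ => |negEntropy γ|) '' Pi)
    BddAbove ((fun γ => |negEntropy γ|) '' Pi) ∧
    (∀ ε > (0:ℝ), |OTreg ε - OT| ≤ ε * M) ∧
    Filter.Tendsto OTreg (nhdsWithin 0 (Set.Ioi 0)) (nhds OT) := by
  intro Pi cost OTreg OT M
  -- basic facts about members of Pi
  have hle1 : ∀ γ ∈ Pi, ∀ i j, γ i j ≤ 1 := by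
    intro γ hγ i j
    obtain ⟨h0, hrow, hcol⟩ := hγ
    have h1 : γ i j ≤ ∑ j', γ i j' :=
      Finset.single_le_sum (fun j' _ => h0 i j') (Finset.mem_univ j)
    have h2 : α i ≤ ∑ i', α i' :=
      Finset.single_le_sum (fun i' _ => hα i') (Finset.mem_univ i)
    rw [hrow i] at h1; linarith [hαsum ▸ h2]
  have hEnt : ∀ γ ∈ Pi, |negEntropy γ| ≤ (n : ℝ) * m := by
    intro γ hγ
    exact negEntropy_abs_le hγ.1 (hle1 γ hγ)
  -- Pi nonempty
  have hPine : ∃ γ, γ ∈ Pi := by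
    refine ⟨fun i j => α i * β j, fun i j => mul_nonneg (hα i) (hβ j), ?_, ?_⟩
    · intro i; rw [← Finset.mul_sum, hβsum, mul_one]
    · intro j; rw [← Finset.sum_mul, hαsum, one_mul]
  obtain ⟨γ₀, hγ₀⟩ := hPine
  -- BddAbove
  have hbdd : BddAbove ((fun γ => |negEntropy γ|) '' Pi) := by
    refine ⟨(n : ℝ) * m, ?_⟩
    rintro x ⟨γ, hγ, rfl⟩
    exact hEnt γ hγ
  have hMentne : ((fun γ => |negEntropy γ|) '' Pi).Nonempty := ⟨_, γ₀, hγ₀, rfl⟩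
  have hM0 : 0 ≤ M := le_csSup hbdd ⟨γ₀, hγ₀, rfl⟩ |>.trans' (abs_nonneg _)
  have hMle : ∀ γ ∈ Pi, |negEntropy γ| ≤ M := fun γ hγ => le_csSup hbdd ⟨γ, hγ, rfl⟩
  -- bound on cost
  have hcostb : ∀ γ ∈ Pi, |cost γ| ≤ ∑ i, ∑ j, |C i j| := by
    intro γ hγ
    calc |cost γ| ≤ ∑ i, |∑ j, C i j * γ i j| := Finset.abs_sum_le_sum_abs _ _
      _ ≤ ∑ i, ∑ j, |C i j * γ i j| :=
          Finset.sum_le_sum fun i _ => Finset.abs_sum_le_sum_abs _ _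
      _ ≤ ∑ i, ∑ j, |C i j| := by
          apply Finset.sum_le_sum; intro i _
          apply Finset.sum_le_sum; intro j _
          rw [abs_mul]
          calc |C i j| * |γ i j| ≤ |C i j| * 1 := by
                apply mul_le_mul_of_nonneg_left _ (abs_nonneg _)
                rw [abs_of_nonneg (hγ.1 i j)]; exact hle1 γ hγ i j
            _ = |C i j| := mul_one _
  set B : ℝ := ∑ i, ∑ j, |C i j| with hB
  -- sets
  have hSne : ∀ ε : ℝ, {c : ℝ | ∃ γ ∈ Pi, c = cost γ + ε * negEntropy γ}.Nonempty :=
    fun ε => ⟨_, γ₀, hγ₀, rfl⟩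
  have hOTne : {c : ℝ | ∃ γ ∈ Pi, c = cost γ}.Nonempty := ⟨_, γ₀, hγ₀, rfl⟩
  have hSbdd : ∀ ε : ℝ, 0 ≤ ε → BddBelow {c : ℝ | ∃ γ ∈ Pi, c = cost γ + ε * negEntropy γ} := by
    intro ε hε
    refine ⟨-B - ε * M, ?_⟩
    rintro c ⟨γ, hγ, rfl⟩
    have h1 := hcostb γ hγ
    have h2 := hMle γ hγ
    have h3 : -M ≤ negEntropy γ := by
      have := neg_abs_le (negEntropy γ); linarith [h2]
    have h4 : -(ε * M) ≤ ε * negEntropy γ := by nlinarith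
    have h5 : -B ≤ cost γ := by
      have := neg_abs_le (cost γ); linarith
    linarith
  have hOTbdd : BddBelow {c : ℝ | ∃ γ ∈ Pi, c = cost γ} := by
    refine ⟨-B, ?_⟩
    rintro c ⟨γ, hγ, rfl⟩
    have := neg_abs_le (cost γ); linarith [hcostb γ hγ]
  -- the key estimate
  have key : ∀ ε : ℝ, 0 ≤ ε → |OTreg ε - OT| ≤ ε * M := by
    intro ε hε
    rw [abs_le]
    constructor
    · -- OT - ε M ≤ OTreg ε, i.e. for each c in S_ε, OT ≤ c + εM
      rw [neg_le, neg_sub]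
      have h1 : OT ≤ OTreg ε + ε * M := by
        have : OT - ε * M ≤ OTreg ε := by
          apply le_csInf (hSne ε)
          rintro c ⟨γ, hγ, rfl⟩
          have hc : OT ≤ cost γ := csInf_le hOTbdd ⟨γ, hγ, rfl⟩
          have h2 := hMle γ hγ
          have h3 : -M ≤ negEntropy γ := by
            have := neg_abs_le (negEntropy γ); linarith
          nlinarith
        linarith
      linarith
    · -- OTreg ε ≤ OT + ε M
      have : OTreg ε - ε * M ≤ OT := by
        apply le_csInf hOTne
        rintro c ⟨γ, hγ, rfl⟩
        have hc : OTreg ε ≤ cost γ + ε * negEntropy γ := csInf_le (hSbdd ε hε) ⟨γ, hγ, rfl⟩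
        have h2 := hMle γ hγ
        have h3 : negEntropy γ ≤ M := (le_abs_self _).trans h2
        nlinarith
      linarith
  refine ⟨hbdd, fun ε hε => key ε hε.le, ?_⟩
  -- Tendsto
  have hg : Filter.Tendsto (fun ε : ℝ => ε * M) (nhdsWithin 0 (Set.Ioi 0)) (nhds 0) := by
    have : Filter.Tendsto (fun ε : ℝ => ε * M) (nhds 0) (nhds (0 * M)) :=
      (continuous_id.mul continuous_const).tendsto 0
    rw [zero_mul] at this
    exact this.mono_left nhdsWithin_le_nhds
  have hsq : Filter.Tendsto (fun ε => OTreg ε - OT) (nhdsWithin 0 (Set.Ioi 0)) (nhds 0) := by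
    apply squeeze_zero_norm' _ hg
    filter_upwards [self_mem_nhdsWithin] with ε (hε : ε ∈ Set.Ioi 0)
    simpa [Real.norm_eq_abs] using key ε (le_of_lt hε)
  have := hsq.add (tendsto_const_nhds (x := OT))
  simpa using this
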